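/- arXiv:2310.17282 — 3 statements merged into one kernel-verified Lean document; each statement's English description precedes it below -/
import Mathlib

section
/- For any two opposite lazy l-tracks f and g on the multilayered cycle MC_n^k, there exists a step i ∈ {1,...,l} such that f(i) and g(i) lie in the same layer, i.e. p₂(f(i)) = p₂(g(i)). -/
/-- The multilayered cycle `MC n k` on vertex set `ZMod n × Fin k`. -/
def MC (n k : ℕ) : SimpleGraph (ZMod n × Fin k) where
  Adj u v := u ≠ v ∧ ((u.1 = v.1 ∧ (u.2.1 + 1 = v.2.1 ∨ v.2.1 + 1 = u.2.1)) ∨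
      (u.2 = v.2 ∧ (u.1 + 1 = v.1 ∨ v.1 + 1 = u.1)))
  symm := by
    constructor
    rintro u v ⟨h1, h2⟩
    refine ⟨h1.symm, ?_⟩
    rcases h2 with ⟨ha, hb⟩ | ⟨ha, hb⟩
    · exact Or.inl ⟨ha.symm, hb.symm⟩
    · exact Or.inr ⟨ha.symm, hb.symm⟩
  loopless := by constructor; rintro u ⟨h1, -⟩; exact h1 rfl

/-- A lazy `l`-track on `G`: surjective, consecutive values equal or adjacent. -/
def IsLazyTrack {V : Type*} (G : SimpleGraph V) {l : ℕ} (f : Fin l → V) : Prop :=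
  Function.Surjective f ∧
    ∀ i : Fin l, ∀ h : i.1 + 1 < l, f ⟨i.1 + 1, h⟩ = f i ∨ G.Adj (f i) (f ⟨i.1 + 1, h⟩)

/-- An `l`-track on `G`: surjective, consecutive values adjacent. -/
def IsTrack {V : Type*} (G : SimpleGraph V) {l : ℕ} (f : Fin l → V) : Prop :=
  Function.Surjective f ∧
    ∀ i : Fin l, ∀ h : i.1 + 1 < l, G.Adj (f i) (f ⟨i.1 + 1, h⟩)

/-- `f` and `g` are opposite lazy `l`-tracks: exactly one of them moves at each step. -/
def OppositeTracks {V : Type*} (G : SimpleGraph V) {l : ℕ} (f g : Fin l → V) : Prop :=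
  ∀ i : Fin l, ∀ h : i.1 + 1 < l,
    (G.Adj (f i) (f ⟨i.1 + 1, h⟩) ↔ g ⟨i.1 + 1, h⟩ = g i)

/-!
Along the two tracks, the layer difference `p₂(f(i)) - p₂(g(i))` changes by at most one per step,
since at each step exactly one of the tracks moves, and it moves by at most one layer. Surjectivity
puts `f` on the top layer at some step, where the difference is `≥ 0`, and `g` on the top layer
at another, where it is `≤ 0`; a discrete intermediate value argument yields a zero in between.
-/

section DiscreteIVT

variable {l : ℕ} {d : Fin l → ℤ}

theorem Fin.neg_iff_neg_of_abs_sub_le_one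
    (hd : ∀ i : Fin l, ∀ h : i.1 + 1 < l, |d ⟨i.1 + 1, h⟩ - d i| ≤ 1) (hne : ∀ i, d i ≠ 0)
    (i j : Fin l) : d i < 0 ↔ d j < 0 := by
  have hzero : ∀ m (hm : m < l), d ⟨m, hm⟩ < 0 ↔ d ⟨0, by omega⟩ < 0 := by
    intro m
    induction m with
    | zero => intro _; rfl
    | succ m ih =>
      intro hm
      have hstep : |d ⟨m + 1, hm⟩ - d ⟨m, by omega⟩| ≤ 1 := hd ⟨m, by omega⟩ hm
      rw [abs_le] at hstep
      have hm_ne := hne ⟨m, by omega⟩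
      have hsucc_ne := hne ⟨m + 1, hm⟩
      rw [← ih (by omega)]
      omega
  rw [hzero i i.2, hzero j j.2]

theorem Fin.exists_eq_zero_of_abs_sub_le_one
    (hd : ∀ i : Fin l, ∀ h : i.1 + 1 < l, |d ⟨i.1 + 1, h⟩ - d i| ≤ 1) {a b : Fin l}
    (ha : d a ≤ 0) (hb : 0 ≤ d b) : ∃ i, d i = 0 := by
  by_contra! hne
  have := Fin.neg_iff_neg_of_abs_sub_le_one hd hne a b
  have := hne a
  have := hne b
  omega

end DiscreteIVT

theorem OppositeTracks.abs_sub_sub_le_one {V : Type*} {G : SimpleGraph V} {l : ℕ}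
    {f g : Fin l → V} {φ : V → ℤ} (hφ : ∀ u v, G.Adj u v → |φ v - φ u| ≤ 1)
    (hf : IsLazyTrack G f) (hg : IsLazyTrack G g) (hop : OppositeTracks G f g)
    (i : Fin l) (h : i.1 + 1 < l) :
    |(φ (f ⟨i.1 + 1, h⟩) - φ (g ⟨i.1 + 1, h⟩)) - (φ (f i) - φ (g i))| ≤ 1 := by
  by_cases hmove : G.Adj (f i) (f ⟨i.1 + 1, h⟩)
  · rw [(hop i h).mp hmove]
    simpa only [sub_sub_sub_cancel_right] using hφ _ _ hmove
  · have hfstay : f ⟨i.1 + 1, h⟩ = f i := (hf.2 i h).resolve_right hmove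
    have hgmove : G.Adj (g i) (g ⟨i.1 + 1, h⟩) :=
      (hg.2 i h).resolve_left fun hgstay => hmove ((hop i h).mpr hgstay)
    rw [hfstay, sub_sub_sub_cancel_left, abs_sub_comm]
    exact hφ _ _ hgmove

theorem MC.abs_layer_sub_le_one {n k : ℕ} {u v : ZMod n × Fin k} (huv : (MC n k).Adj u v) :
    |((v.2 : ℕ) : ℤ) - ((u.2 : ℕ) : ℤ)| ≤ 1 := by
  rcases huv with ⟨-, ⟨-, h | h⟩ | ⟨h, -⟩⟩
  · rw [abs_le]; omega
  · rw [abs_le]; omega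
  · simp [h]

theorem stmt1_general (n k l : ℕ) (hk : 2 ≤ k)
    (f g : Fin l → ZMod n × Fin k)
    (hf : IsLazyTrack (MC n k) f) (hg : IsLazyTrack (MC n k) g)
    (hop : OppositeTracks (MC n k) f g) :
    ∃ i : Fin l, (f i).2 = (g i).2 := by
  have hstep := hop.abs_sub_sub_le_one (φ := fun v => ((v.2 : ℕ) : ℤ))
    (fun _ _ => MC.abs_layer_sub_le_one) hf hg
  obtain ⟨a, hga⟩ := hg.1 (0, ⟨k - 1, by omega⟩)
  obtain ⟨b, hfb⟩ := hf.1 (0, ⟨k - 1, by omega⟩)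
  have hga_top : ((g a).2 : ℕ) = k - 1 := by rw [hga]
  have hfb_top : ((f b).2 : ℕ) = k - 1 := by rw [hfb]
  obtain ⟨i, hi⟩ := Fin.exists_eq_zero_of_abs_sub_le_one
    (d := fun i => ((f i).2 : ℕ) - ((g i).2 : ℤ)) hstep (a := a) (b := b)
    (by have := (f a).2.2; omega) (by have := (g b).2.2; omega)
  exact ⟨i, Fin.ext (by omega)⟩

theorem stmt1 (n k l : ℕ) (hn : 3 ≤ n) (hk : 2 ≤ k)
    (f g : Fin l → ZMod n × Fin k)
    (hf : IsLazyTrack (MC n k) f) (hg : IsLazyTrack (MC n k) g)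
    (hop : OppositeTracks (MC n k) f g) :
    ∃ i : Fin l, (f i).2 = (g i).2 :=
  stmt1_general n k l hk f g hf hg hop
end

section
/- For any two lazy l-tracks f and g on the multilayered cycle MC_n^k, min over i ∈ {1,...,l} of d(f(i), g(i)) is at most ⌊n/2⌋ + 1. Hence the strong vertex span of MC_n^k is at most ⌊n/2⌋ + 1. -/
open SimpleGraph

theorem neg_of_le_of_neg_of_abs_step_le {l c : ℕ} {s : Fin l → ℤ} (hgap : ∀ i, (c : ℤ) < |s i|)
    (hstep : ∀ (i : Fin l) (h : i.1 + 1 < l), |s ⟨i.1 + 1, h⟩ - s i| ≤ 2 * c + 1)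
    {a b : Fin l} (hab : a ≤ b) (ha : s a < 0) : s b < 0 := by
  suffices ∀ m, a.1 ≤ m → ∀ hm : m < l, s ⟨m, hm⟩ < 0 from this b hab b.2
  intro m ham
  induction m, ham using Nat.le_induction with
  | base => exact fun _ => ha
  | succ m _ ih =>
    intro hm
    -- a step of length at most `2 * c + 1` cannot jump over `[-c, c]`
    have hneg := ih (by omega)
    have hgap₀ := hgap ⟨m, by omega⟩
    have hgap₁ := hgap ⟨m + 1, hm⟩
    have hstep₀ : |s ⟨m + 1, hm⟩ - s ⟨m, _⟩| ≤ 2 * c + 1 := hstep ⟨m, by omega⟩ hm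
    rw [abs_of_neg hneg] at hgap₀
    rw [lt_abs] at hgap₁
    rw [abs_le] at hstep₀
    omega

theorem exists_abs_le_of_nonpos_of_nonneg {l c : ℕ} {s : Fin l → ℤ}
    (hstep : ∀ (i : Fin l) (h : i.1 + 1 < l), |s ⟨i.1 + 1, h⟩ - s i| ≤ 2 * c + 1)
    {a b : Fin l} (ha : s a ≤ 0) (hb : 0 ≤ s b) : ∃ i, |s i| ≤ c := by
  by_contra! hgap
  have hsa : s a < 0 := by have := hgap a; rw [lt_abs] at this; omega
  have hsb : (-s) b < 0 := by have := hgap b; rw [lt_abs] at this; simp only [Pi.neg_apply]; omega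
  have h₁ := neg_of_le_of_neg_of_abs_step_le hgap hstep (le_max_left a b) hsa
  have h₂ := neg_of_le_of_neg_of_abs_step_le (by simpa using hgap)
    (fun i h => by rw [Pi.neg_apply, Pi.neg_apply, neg_sub_neg, abs_sub_comm]; exact hstep i h)
    (le_max_right a b) hsb
  simp only [Pi.neg_apply] at h₂
  omega

namespace MC

variable {n k : ℕ}

theorem adj_add_one (hn : 1 < n) (x : ZMod n) (j : Fin k) : (MC n k).Adj (x, j) (x + 1, j) := by
  have : Fact (1 < n) := ⟨hn⟩
  refine ⟨fun h => (one_ne_zero : (1 : ZMod n) ≠ 0) ?_, Or.inr ⟨rfl, Or.inl rfl⟩⟩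
  simpa using congrArg Prod.fst h

theorem exists_walk_add_natCast (hn : 1 < n) (x : ZMod n) (j : Fin k) (m : ℕ) :
    ∃ p : (MC n k).Walk (x, j) (x + m, j), p.length = m := by
  induction m with
  | zero => exact ⟨Walk.nil.copy rfl (by simp), by simp⟩
  | succ m ih =>
    obtain ⟨p, hp⟩ := ih
    refine ⟨(p.concat (adj_add_one hn _ j)).copy rfl (by push_cast; rw [add_assoc]), ?_⟩
    simp [hp]

theorem exists_walk_length_le_half (hn : 1 < n) (x y : ZMod n) (j : Fin k) :
    ∃ p : (MC n k).Walk (x, j) (y, j), p.length ≤ n / 2 := by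
  have : NeZero n := ⟨by omega⟩
  set m := (y - x).val
  have hm : (m : ZMod n) = y - x := ZMod.natCast_zmod_val _
  have hmn : m < n := ZMod.val_lt _
  by_cases hle : m ≤ n / 2
  · obtain ⟨p, hp⟩ := exists_walk_add_natCast hn x j m
    exact ⟨p.copy rfl (by rw [hm, add_sub_cancel]), by simpa [hp]⟩
  · obtain ⟨p, hp⟩ := exists_walk_add_natCast hn y j (n - m)
    have hend : y + ((n - m : ℕ) : ZMod n) = x := by
      rw [Nat.cast_sub hmn.le, ZMod.natCast_self, hm]; ring
    exact ⟨p.reverse.copy (by rw [hend]) rfl, by simp [hp]; omega⟩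

theorem abs_snd_sub_le_one_of_adj {u v : ZMod n × Fin k} (h : (MC n k).Adj u v) :
    |((u.2 : ℕ) : ℤ) - (v.2 : ℕ)| ≤ 1 := by
  rcases h with ⟨-, ⟨-, hb⟩ | ⟨hb, -⟩⟩
  · rw [abs_le]; omega
  · simp [hb]

theorem dist_le_of_abs_snd_sub_le_one (hn : 1 < n) {u v : ZMod n × Fin k}
    (h : |((u.2 : ℕ) : ℤ) - (v.2 : ℕ)| ≤ 1) : (MC n k).dist u v ≤ n / 2 + 1 := by
  obtain ⟨x, i⟩ := u
  obtain ⟨y, j⟩ := v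
  obtain ⟨p, hp⟩ := exists_walk_length_le_half hn x y i
  by_cases hij : i = j
  · subst hij
    have := dist_le p
    omega
  · have hadj : (MC n k).Adj (y, i) (y, j) := by
      refine ⟨by simpa using hij, Or.inl ⟨rfl, ?_⟩⟩
      rw [abs_le] at h
      dsimp only at h ⊢
      have : (i : ℕ) ≠ j := Fin.val_ne_of_ne hij
      omega
    have := dist_le (p.concat hadj)
    rw [Walk.length_concat] at this
    omega

theorem abs_snd_step_le_one {l : ℕ} {f : Fin l → ZMod n × Fin k} (hf : IsLazyTrack (MC n k) f)
    (i : Fin l) (h : i.1 + 1 < l) : |(((f ⟨i.1 + 1, h⟩).2 : ℕ) : ℤ) - ((f i).2 : ℕ)| ≤ 1 := by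
  rcases hf.2 i h with heq | hadj
  · simp [heq]
  · rw [abs_sub_comm]; exact abs_snd_sub_le_one_of_adj hadj

theorem abs_snd_sub_snd_step_le_two {l : ℕ} {f g : Fin l → ZMod n × Fin k}
    (hf : IsLazyTrack (MC n k) f) (hg : IsLazyTrack (MC n k) g) (i : Fin l) (h : i.1 + 1 < l) :
    |((((f ⟨i.1 + 1, h⟩).2 : ℕ) : ℤ) - ((g ⟨i.1 + 1, h⟩).2 : ℕ)) - (((f i).2 : ℕ) - ((g i).2 : ℕ))|
      ≤ 2 := by
  have hfi := abs_snd_step_le_one hf i h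
  have hgi := abs_snd_step_le_one hg i h
  rw [abs_le] at hfi hgi ⊢
  omega

end MC

open MC in
theorem stmt10 (n k l : ℕ) (hn : 3 ≤ n) (hk : 2 ≤ k)
    (f g : Fin l → ZMod n × Fin k)
    (hf : IsLazyTrack (MC n k) f) (hg : IsLazyTrack (MC n k) g) :
    ∃ i : Fin l, (MC n k).dist (f i) (g i) ≤ n / 2 + 1 := by
  obtain ⟨a, ha⟩ := hf.1 (0, ⟨0, by omega⟩)
  obtain ⟨b, hb⟩ := hg.1 (0, ⟨0, by omega⟩)
  -- `f` is in layer `0` at time `a`, and `g` at time `b`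
  obtain ⟨i, hi⟩ := exists_abs_le_of_nonpos_of_nonneg (c := 1)
    (s := fun i => ((f i).2 : ℕ) - ((g i).2 : ℕ))
    (fun i h => (abs_snd_sub_snd_step_le_two hf hg i h).trans (by norm_num))
    (a := a) (b := b) (by simp [ha]) (by simp [hb])
  exact ⟨i, dist_le_of_abs_snd_sub_le_one (by omega) (by exact_mod_cast hi)⟩
end

section
/- There exist an l ∈ ℕ and two l-tracks f, g on the multilayered cycle MC_n^k such that d(f(i), g(i)) ≥ ⌊n/2⌋ + 1 for all i ∈ {1,...,l}. Consequently both the strong vertex span and the direct vertex span of MC_n^k equal ⌊n/2⌋ + 1. -/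
/-!
`MC n k` is the box product of the cycle on `ZMod n` (the circulant graph with jump `1`) and the
path on `k` vertices, so a distance is the cycle distance, at most `⌊n/2⌋`, plus the layer distance.

Lower bound: two tracks sweep the cycle layer by layer in lockstep, the second shifted by `⌊n/2⌋`
around the cycle and always on a neighbouring layer. A walk of length `L` in the cycle lifts to an
integer `t` with `|t| ≤ L` and `t ≡ b - a`, so the shift costs at least `⌊n/2⌋`.

Upper bound: while `f` goes from the bottom to the top layer, the layer gap between `f` and `g`,
which changes by at most `2` per step, goes from `≤ 0` to `≥ 0`, so at some time it is at most `1`.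
-/

open SimpleGraph

theorem ZMod.half_le_abs_of_intCast_eq_half {n : ℕ} {t : ℤ}
    (ht : (t : ZMod n) = ((n / 2 : ℕ) : ZMod n)) : ((n / 2 : ℕ) : ℤ) ≤ |t| := by
  rw [← Int.cast_natCast, ZMod.intCast_eq_intCast_iff_dvd_sub] at ht
  obtain ⟨q, hq⟩ := ht
  have hhalf : 2 * ((n / 2 : ℕ) : ℤ) ≤ n := by omega
  rw [le_abs]
  rcases le_or_gt q 0 with hq0 | hq0
  · left; nlinarith
  · right; nlinarith

theorem exists_abs_le_one_of_abs_sub_le_two {l : ℕ} (D : Fin l → ℤ)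
    (hstep : ∀ i : Fin l, ∀ h : i.1 + 1 < l, |D ⟨i.1 + 1, h⟩ - D i| ≤ 2)
    {a b : Fin l} (ha : D a ≤ 0) (hb : 0 ≤ D b) : ∃ i, |D i| ≤ 1 := by
  by_contra! hbig
  simp only [lt_abs] at hbig
  have hl : 0 < l := a.pos
  -- no value lies in `[-1, 1]`, so a step of size at most `2` cannot change the sign
  have hsign : ∀ i : Fin l, D i < 0 ↔ D ⟨0, hl⟩ < 0 := by
    rintro ⟨j, hj⟩
    induction j with
    | zero => rfl
    | succ j ih =>
      rw [← ih (by omega)]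
      have h1 := hbig ⟨j, by omega⟩
      have h2 := hbig ⟨j + 1, hj⟩
      have h3 : |D ⟨j + 1, hj⟩ - D ⟨j, by omega⟩| ≤ 2 := hstep ⟨j, by omega⟩ hj
      rw [abs_le] at h3
      omega
  have := hbig a
  have := (hsign b).2 ((hsign a).1 (by omega))
  omega

namespace SimpleGraph

variable {α β : Type*} {G : SimpleGraph α} {H : SimpleGraph β}

theorem dist_boxProd (hG : G.Preconnected) (hH : H.Preconnected) (x y : α × β) :
    (G □ H).dist x y = G.dist x.1 y.1 + H.dist x.2 y.2 := by
  rw [dist, edist_boxProd, ENat.toNat_add (edist_ne_top_iff_reachable.2 (hG _ _))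
    (edist_ne_top_iff_reachable.2 (hH _ _))]
  rfl

theorem dist_pathGraph_le_one {k : ℕ} {i j : Fin k} (h : |(i : ℤ) - j| ≤ 1) :
    (pathGraph k).dist i j ≤ 1 := by
  rcases eq_or_ne i j with rfl | hne
  · simp
  · refine (dist_eq_one_iff_adj.2 (pathGraph_adj.2 ?_)).le
    rw [abs_le] at h
    have := Fin.val_ne_of_ne hne
    omega

section CycleOnZMod

variable {n : ℕ}

theorem circulantGraph_one_adj_add_one [Fact (1 < n)] (a : ZMod n) :
    (circulantGraph ({1} : Set (ZMod n))).Adj a (a + 1) := by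
  simp [circulantGraph_adj]

theorem exists_walk_add_natCast [Fact (1 < n)] (a : ZMod n) (m : ℕ) :
    ∃ p : (circulantGraph ({1} : Set (ZMod n))).Walk a (a + m), p.length = m := by
  induction m generalizing a with
  | zero => exact ⟨Walk.nil.copy rfl (by simp), by simp⟩
  | succ m ih =>
    obtain ⟨p, hp⟩ := ih (a + 1)
    exact ⟨(Walk.cons (circulantGraph_one_adj_add_one a) p).copy rfl (by push_cast; ring),
      by simp [hp]⟩

theorem dist_add_natCast_le [Fact (1 < n)] (a : ZMod n) (m : ℕ) :
    (circulantGraph ({1} : Set (ZMod n))).dist a (a + m) ≤ m := by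
  obtain ⟨p, hp⟩ := exists_walk_add_natCast a m
  exact (dist_le p).trans_eq hp

theorem circulantGraph_one_preconnected [Fact (1 < n)] :
    (circulantGraph ({1} : Set (ZMod n))).Preconnected := fun a b => by
  obtain ⟨p, -⟩ := exists_walk_add_natCast a (b - a).val
  simpa using p.reachable

theorem dist_circulantGraph_one_le [Fact (1 < n)] (a b : ZMod n) :
    (circulantGraph ({1} : Set (ZMod n))).dist a b ≤ n / 2 := by
  have hab := dist_add_natCast_le a (b - a).val
  have hba := dist_add_natCast_le b (a - b).val
  simp only [ZMod.natCast_zmod_val, add_sub_cancel] at hab hba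
  rw [dist_comm] at hba
  rcases eq_or_ne a b with rfl | hne
  · simp
  · have : NeZero (b - a) := ⟨sub_ne_zero.2 hne.symm⟩
    have hval : (a - b).val = n - (b - a).val := by rw [← neg_sub, ZMod.val_neg_of_ne_zero]
    have := ZMod.val_lt (b - a)
    omega

theorem Walk.exists_intCast_eq_sub {a b : ZMod n}
    (p : (circulantGraph ({1} : Set (ZMod n))).Walk a b) :
    ∃ t : ℤ, |t| ≤ p.length ∧ (t : ZMod n) = b - a := by
  induction p with
  | nil => exact ⟨0, by simp⟩
  | @cons a c b hadj p ih =>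
    obtain ⟨t, ht, hcast⟩ := ih
    rw [circulantGraph_adj] at hadj
    rcases hadj.2 with h | h <;> simp only [Set.mem_singleton_iff] at h
    · refine ⟨t - 1, ?_, ?_⟩
      · simp only [Walk.length_cons, Nat.cast_add, Nat.cast_one]
        have := abs_sub t 1
        simp only [abs_one] at this
        omega
      · push_cast; rw [hcast]; linear_combination h
    · refine ⟨t + 1, ?_, ?_⟩
      · simp only [Walk.length_cons, Nat.cast_add, Nat.cast_one]
        have := abs_add_le t 1
        simp only [abs_one] at this
        omega
      · push_cast; rw [hcast]; linear_combination -h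

theorem half_le_dist_add_half [Fact (1 < n)] (a : ZMod n) :
    n / 2 ≤ (circulantGraph ({1} : Set (ZMod n))).dist a (a + (n / 2 : ℕ)) := by
  obtain ⟨p, hp⟩ := (circulantGraph_one_preconnected a (a + (n / 2 : ℕ))).exists_walk_length_eq_dist
  obtain ⟨t, ht, hcast⟩ := p.exists_intCast_eq_sub
  have := ZMod.half_le_abs_of_intCast_eq_half (hcast.trans (add_sub_cancel_left _ _))
  omega

end CycleOnZMod

end SimpleGraph

theorem IsTrack.isLazyTrack {V : Type*} {G : SimpleGraph V} {l : ℕ} {f : Fin l → V}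
    (hf : IsTrack G f) : IsLazyTrack G f :=
  ⟨hf.1, fun i h => Or.inr (hf.2 i h)⟩

theorem IsLazyTrack.abs_snd_sub_le_one {α : Type*} {G : SimpleGraph α} {k l : ℕ}
    {f : Fin l → α × Fin k} (hf : IsLazyTrack (G □ pathGraph k) f) (i : Fin l) (h : i.1 + 1 < l) :
    |((f ⟨i.1 + 1, h⟩).2 : ℤ) - (f i).2| ≤ 1 := by
  rcases hf.2 i h with heq | hadj
  · simp [heq]
  · rw [abs_le]
    rcases boxProd_adj.1 hadj with ⟨-, heq⟩ | ⟨hpath, -⟩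
    · simp [heq]
    · rw [pathGraph_adj] at hpath
      omega

/-- Layer schedules `0, 1, …, k-1, k-2` and `1, 0, 1, …, k-2, k-1`. -/
theorem exists_layer_schedules {k : ℕ} (hk : 2 ≤ k) :
    ∃ F G : ℕ → Fin k,
      (∀ q < k, (pathGraph k).Adj (F q) (F (q + 1))) ∧ (∀ j, ∃ q ≤ k, F q = j) ∧
      (∀ q < k, (pathGraph k).Adj (G q) (G (q + 1))) ∧ (∀ j, ∃ q ≤ k, G q = j) ∧
      ∀ q, F q ≠ G q := by
  refine ⟨fun q => ⟨min q (2 * k - 2 - q), by omega⟩,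
    fun q => ⟨if q = 0 then 1 else min (q - 1) (k - 1), by split <;> omega⟩,
    fun q hq => ?_, fun j => ⟨j, by omega, ?_⟩, fun q hq => ?_, fun j => ⟨j + 1, by omega, ?_⟩,
    fun q => ?_⟩ <;>
  simp only [pathGraph_adj, ne_eq, Fin.ext_iff] <;> (try split_ifs) <;> first | contradiction | omega

section RasterScan

variable {α β : Type*}

def rasterScan (m : ℕ) (c : ℕ → α) (L : ℕ → β) (i : ℕ) : α × β :=
  (c (i % (m + 1)), L (i / (m + 1)))

variable {m : ℕ} {c : ℕ → α} {L : ℕ → β}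

theorem rasterScan_add_mul {r : ℕ} (hr : r ≤ m) (q : ℕ) :
    rasterScan m c L (r + (m + 1) * q) = (c r, L q) := by
  obtain ⟨hdiv, hmod⟩ := (Nat.div_mod_unique (b := m + 1) (d := q) m.succ_pos).2
    ⟨rfl, Nat.lt_succ_of_le hr⟩
  simp only [rasterScan, hdiv, hmod]

theorem rasterScan_add_one_of_mod_lt {i : ℕ} (h : i % (m + 1) < m) :
    rasterScan m c L (i + 1) = (c (i % (m + 1) + 1), L (i / (m + 1))) := by
  conv_lhs => rw [← Nat.mod_add_div i (m + 1), add_right_comm]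
  exact rasterScan_add_mul h _

theorem rasterScan_add_one_of_mod_eq {i : ℕ} (h : i % (m + 1) = m) :
    rasterScan m c L (i + 1) = (c 0, L (i / (m + 1) + 1)) := by
  have : i + 1 = 0 + (m + 1) * (i / (m + 1) + 1) := by
    have := Nat.mod_add_div i (m + 1)
    rw [mul_add]
    omega
  rw [this]
  exact rasterScan_add_mul (Nat.zero_le _) _

theorem isTrack_rasterScan {G : SimpleGraph α} {H : SimpleGraph β} {K : ℕ}
    (hc : ∀ r < m, G.Adj (c r) (c (r + 1))) (hlap : c m = c 0) (hcs : ∀ a, ∃ r ≤ m, c r = a)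
    (hL : ∀ q < K, H.Adj (L q) (L (q + 1))) (hLs : ∀ b, ∃ q ≤ K, L q = b) :
    IsTrack (G □ H) (fun i : Fin ((m + 1) * (K + 1)) => rasterScan m c L i) := by
  refine ⟨fun ⟨a, b⟩ => ?_, fun ⟨i, hi⟩ hi' => ?_⟩
  · obtain ⟨r, hr, rfl⟩ := hcs a
    obtain ⟨q, hq, rfl⟩ := hLs b
    refine ⟨⟨r + (m + 1) * q, ?_⟩, rasterScan_add_mul hr q⟩
    nlinarith
  · dsimp only
    rcases (Nat.lt_succ_iff.1 (Nat.mod_lt i (Nat.succ_pos m))).lt_or_eq with h | h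
    · rw [rasterScan_add_one_of_mod_lt h]
      exact boxProd_adj_left.2 (hc _ h)
    · rw [rasterScan_add_one_of_mod_eq h]
      have hq : i / (m + 1) < K := by
        have := Nat.mod_add_div i (m + 1)
        rw [h] at this
        by_contra! hK
        nlinarith
      simp only [rasterScan, h, hlap]
      exact boxProd_adj_right.2 (hL _ hq)

end RasterScan

theorem MC_eq_boxProd (n k : ℕ) : MC n k = circulantGraph ({1} : Set (ZMod n)) □ pathGraph k := by
  ext ⟨a, i⟩ ⟨b, j⟩
  simp only [MC, boxProd_adj, circulantGraph_adj, pathGraph_adj, Set.mem_singleton_iff,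
    sub_eq_iff_eq_add', ne_eq, Prod.mk.injEq, Fin.ext_iff]
  grind

section MultilayeredCycle

variable {n k : ℕ} [Fact (1 < n)]

theorem isTrack_rasterScan_natCast_add {β : Type*} {H : SimpleGraph β} {K : ℕ} {L : ℕ → β}
    (d : ZMod n) (hL : ∀ q < K, H.Adj (L q) (L (q + 1))) (hLs : ∀ b, ∃ q ≤ K, L q = b) :
    IsTrack (circulantGraph {1} □ H)
      (fun i : Fin ((n + 1) * (K + 1)) => rasterScan n (fun r : ℕ => (r : ZMod n) + d) L i) :=
  isTrack_rasterScan
    (fun r _ => by rw [Nat.cast_succ, add_right_comm]; exact circulantGraph_one_adj_add_one _)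
    (by simp) (fun a => ⟨(a - d).val, (ZMod.val_lt _).le, by simp⟩) hL hLs

theorem exists_isTrack_half_add_one_le_dist (hk : 2 ≤ k) :
    ∃ l, ∃ f g : Fin l → ZMod n × Fin k,
      IsTrack (circulantGraph {1} □ pathGraph k) f ∧ IsTrack (circulantGraph {1} □ pathGraph k) g ∧
      ∀ i, n / 2 + 1 ≤ (circulantGraph {1} □ pathGraph k).dist (f i) (g i) := by
  obtain ⟨F, G, hF, hFs, hG, hGs, hFG⟩ := exists_layer_schedules hk
  refine ⟨_, _, _, isTrack_rasterScan_natCast_add 0 hF hFs,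
    isTrack_rasterScan_natCast_add (n / 2 : ℕ) hG hGs, fun i => ?_⟩
  rw [dist_boxProd circulantGraph_one_preconnected (pathGraph_preconnected k)]
  simp only [rasterScan, add_zero]
  exact add_le_add (half_le_dist_add_half _)
    ((pathGraph_preconnected k _ _).pos_dist_of_ne (hFG _))

theorem exists_dist_le_half_add_one_of_isLazyTrack [NeZero k] {l : ℕ}
    {f g : Fin l → ZMod n × Fin k} (hf : IsLazyTrack (circulantGraph {1} □ pathGraph k) f)
    (hg : IsLazyTrack (circulantGraph {1} □ pathGraph k) g) :
    ∃ i, (circulantGraph {1} □ pathGraph k).dist (f i) (g i) ≤ n / 2 + 1 := by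
  obtain ⟨i₀, hi₀⟩ := hf.1 (0, 0)
  obtain ⟨i₁, hi₁⟩ := hf.1 (0, ⟨k - 1, Nat.sub_one_lt (NeZero.ne k)⟩)
  -- while `f` climbs from the bottom to the top layer, the layer gap to `g` changes sign
  obtain ⟨i, hi⟩ := exists_abs_le_one_of_abs_sub_le_two (fun i => ((f i).2 : ℤ) - (g i).2)
    (fun i h => by
      have hf' := hf.abs_snd_sub_le_one i h
      have hg' := hg.abs_snd_sub_le_one i h
      rw [abs_le] at hf' hg' ⊢
      omega)
    (a := i₀) (b := i₁) (by simp [hi₀]) (by simp [hi₁]; omega)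
  refine ⟨i, ?_⟩
  rw [dist_boxProd circulantGraph_one_preconnected (pathGraph_preconnected k)]
  exact add_le_add (dist_circulantGraph_one_le _ _) (dist_pathGraph_le_one hi)

end MultilayeredCycle

theorem stmt12 (n k : ℕ) (hn : 3 ≤ n) (hk : 2 ≤ k) :
    (∃ l : ℕ, ∃ f g : Fin l → ZMod n × Fin k,
      IsTrack (MC n k) f ∧ IsTrack (MC n k) g ∧
      ∀ i : Fin l, n / 2 + 1 ≤ (MC n k).dist (f i) (g i)) ∧
    IsGreatest {m : ℕ | ∃ l : ℕ, ∃ f g : Fin l → ZMod n × Fin k,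
      IsLazyTrack (MC n k) f ∧ IsLazyTrack (MC n k) g ∧
      ∀ i : Fin l, m ≤ (MC n k).dist (f i) (g i)} (n / 2 + 1) ∧
    IsGreatest {m : ℕ | ∃ l : ℕ, ∃ f g : Fin l → ZMod n × Fin k,
      IsTrack (MC n k) f ∧ IsTrack (MC n k) g ∧
      ∀ i : Fin l, m ≤ (MC n k).dist (f i) (g i)} (n / 2 + 1) := by
  have : Fact (1 < n) := ⟨by omega⟩
  have : NeZero k := ⟨by omega⟩
  rw [MC_eq_boxProd]
  obtain ⟨l, f, g, hf, hg, hfg⟩ := exists_isTrack_half_add_one_le_dist (n := n) hk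
  have hlazy {l : ℕ} {f g : Fin l → ZMod n × Fin k} {m : ℕ}
      (hf : IsLazyTrack (circulantGraph {1} □ pathGraph k) f)
      (hg : IsLazyTrack (circulantGraph {1} □ pathGraph k) g)
      (hm : ∀ i, m ≤ (circulantGraph {1} □ pathGraph k).dist (f i) (g i)) : m ≤ n / 2 + 1 :=
    have ⟨i, hi⟩ := exists_dist_le_half_add_one_of_isLazyTrack hf hg
    (hm i).trans hi
  refine ⟨⟨l, f, g, hf, hg, hfg⟩,
    ⟨⟨l, f, g, hf.isLazyTrack, hg.isLazyTrack, hfg⟩, ?_⟩, ⟨⟨l, f, g, hf, hg, hfg⟩, ?_⟩⟩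
  · rintro m ⟨l, f, g, hf, hg, hm⟩
    exact hlazy hf hg hm
  · rintro m ⟨l, f, g, hf, hg, hm⟩
    exact hlazy hf.isLazyTrack hg.isLazyTrack hm
end
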